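/- Let N > 1 and 0 < k < N be integers and set σ = k/N. Then for every τ ∈ ℂ with Im τ > 0 and every z ∈ ℂ with z ∉ ℤ + ℤτ, the function φ(·,τ,σ) is elliptic with respect to the lattice ℤ·Nτ ⊕ ℤ: φ(z + Nτ, τ, σ) = φ(z,τ,σ) and φ(z + 1, τ, σ) = φ(z,τ,σ). -/

import Mathlib

open Complex Filter

/-- `Φ(z,τ) = (exp(πiz) − exp(−πiz)) · ∏_{k=1}^∞ (1 − t q^k)(1 − t⁻¹ q^k)/(1 − q^k)²`,
with `q = exp(2πiτ)`, `t = exp(2πiz)`; for `Im τ > 0` (so `|q| < 1`) the product converges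
absolutely. -/
noncomputable def Phi (z τ : ℂ) : ℂ :=
  (Complex.exp (Real.pi * Complex.I * z) - Complex.exp (-(Real.pi * Complex.I * z))) *
    ∏' k : ℕ,
      (1 - Complex.exp (2 * Real.pi * Complex.I * z) *
            Complex.exp (2 * Real.pi * Complex.I * τ) ^ (k + 1)) *
        (1 - (Complex.exp (2 * Real.pi * Complex.I * z))⁻¹ *
            Complex.exp (2 * Real.pi * Complex.I * τ) ^ (k + 1)) /
        (1 - Complex.exp (2 * Real.pi * Complex.I * τ) ^ (k + 1)) ^ 2

/-- `φ(z,τ,σ) = Φ(z+σ,τ)/Φ(z,τ)`, defined whenever `Φ(z,τ) ≠ 0`. -/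
noncomputable def phi (z τ σ : ℂ) : ℂ := Phi (z + σ) τ / Phi z τ

lemma hasProdZero {f : ℕ → ℂ} (k0 : ℕ) (h : f k0 = 0) : HasProd f 0 := by
  have hev : ∀ᶠ s in (atTop : Filter (Finset ℕ)), ∏ i ∈ s, f i = 0 := by
    filter_upwards [Filter.eventually_ge_atTop ({k0} : Finset ℕ)] with s hs
    exact Finset.prod_eq_zero (hs (Finset.mem_singleton_self k0)) h
  exact Filter.Tendsto.congr' (hev.mono fun s hs => hs.symm) tendsto_const_nhds

lemma summableLog {g : ℕ → ℂ} (hg : Summable fun n => ‖g n‖) :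
    Summable fun n => Complex.log (1 + g n) := by
  have h0 : Filter.Tendsto (fun n => ‖g n‖) atTop (nhds 0) := hg.tendsto_atTop_zero
  apply Summable.of_norm_bounded_eventually_nat (g := fun n => 3/2 * ‖g n‖) (hg.mul_left _)
  filter_upwards [h0.eventually (eventually_le_nhds (by norm_num : (0:ℝ) < 1/2))] with n hn
  exact Complex.norm_log_one_add_half_le_self hn

lemma multipliableOfLog {f : ℕ → ℂ} (h0 : ∀ n, f n ≠ 0)
    (h : Summable fun n => Complex.log (f n)) : Multipliable f :=
  Complex.multipliable_of_summable_log h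

lemma sumGeom {q : ℂ} (hq : ‖q‖ < 1) (x : ℂ) :
    Summable fun n : ℕ => ‖x * q ^ (n + 1)‖ := by
  have h := summable_geometric_of_lt_one (norm_nonneg q) hq
  apply Summable.of_nonneg_of_le (fun n => norm_nonneg _)
    (fun n => ?_) ((h.mul_left (‖x‖ * ‖q‖)))
  rw [norm_mul, norm_pow, pow_succ']
  exact le_of_eq (by ring)

lemma multA {q : ℂ} (hq : ‖q‖ < 1) (x : ℂ) :
    Multipliable (fun n : ℕ => 1 - x * q ^ (n + 1)) := by
  by_cases h0 : ∀ n : ℕ, (1 : ℂ) - x * q ^ (n + 1) ≠ 0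
  · apply multipliableOfLog h0
    have := summableLog (g := fun n : ℕ => -(x * q ^ (n+1))) (by simpa using sumGeom hq x)
    exact this.congr fun n => by rw [sub_eq_add_neg]
  · push_neg at h0
    obtain ⟨k0, hk0⟩ := h0
    exact ⟨0, hasProdZero k0 hk0⟩

lemma oneSubNe {q : ℂ} (hq : ‖q‖ < 1) (n : ℕ) : (1 : ℂ) - q ^ (n + 1) ≠ 0 := by
  intro h
  have h1 : q ^ (n + 1) = 1 := by linear_combination -h
  have h2 : ‖q ^ (n+1)‖ < 1 := by
    rw [norm_pow]
    exact pow_lt_one₀ (norm_nonneg q) hq (Nat.succ_ne_zero n)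
  rw [h1, norm_one] at h2
  exact lt_irrefl _ h2

lemma oneSubGe {q : ℂ} (hq : ‖q‖ < 1) (n : ℕ) : 1 - ‖q‖ ≤ ‖(1:ℂ) - q ^ (n+1)‖ := by
  have h1 : ‖q ^ (n+1)‖ ≤ ‖q‖ := by
    rw [norm_pow]
    exact pow_le_of_le_one (norm_nonneg q) hq.le (Nat.succ_ne_zero n)
  have h2 := norm_sub_norm_le (1:ℂ) (q ^ (n+1))
  simp only [norm_one] at h2
  linarith

lemma multC {q : ℂ} (hq : ‖q‖ < 1) :
    Multipliable (fun n : ℕ => ((1 : ℂ) - q ^ (n + 1))⁻¹) := by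
  have hpos : (0:ℝ) < 1 - ‖q‖ := by linarith
  apply multipliableOfLog (fun n => inv_ne_zero (oneSubNe hq n))
  have hgs : Summable fun n : ℕ => ‖q ^ (n+1) / (1 - q ^ (n+1))‖ := by
    have h := summable_geometric_of_lt_one (norm_nonneg q) hq
    apply Summable.of_nonneg_of_le (fun n => norm_nonneg _) (fun n => ?_)
      (h.mul_left (‖q‖ * (1 - ‖q‖)⁻¹))
    calc ‖q ^ (n+1) / ((1:ℂ) - q ^ (n+1))‖ = ‖q‖^(n+1) / ‖(1:ℂ) - q^(n+1)‖ := by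
          rw [norm_div, norm_pow]
      _ ≤ ‖q‖^(n+1) / (1 - ‖q‖) := by
          exact div_le_div₀ (pow_nonneg (norm_nonneg q) _) le_rfl hpos (oneSubGe hq n)
      _ = ‖q‖ * (1-‖q‖)⁻¹ * ‖q‖ ^ n := by
          rw [div_eq_mul_inv, pow_succ']; ring
  have hs := summableLog hgs
  apply hs.congr
  intro n
  rw [eq_comm, inv_eq_one_div]
  field_simp [oneSubNe hq n]
  rw [sub_add_cancel]

lemma tprodSplit {q : ℂ} (hq : ‖q‖ < 1) (x : ℂ) :
    (∏' k : ℕ, (1 - x * q ^ (k+1)) * (1 - x⁻¹ * q ^ (k+1)) / (1 - q ^ (k+1)) ^ 2)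
      = (∏' k : ℕ, (1 - x * q ^ (k+1))) * (∏' k : ℕ, (1 - x⁻¹ * q ^ (k+1))) *
        (∏' k : ℕ, ((1:ℂ) - q ^ (k+1))⁻¹) ^ 2 := by
  have hc := multC hq
  have h1 : ∀ k : ℕ, (1 - x * q ^ (k+1)) * (1 - x⁻¹ * q ^ (k+1)) / (1 - q ^ (k+1)) ^ 2
      = (1 - x * q ^ (k+1)) * ((1 - x⁻¹ * q ^ (k+1)) *
          (((1:ℂ) - q ^ (k+1))⁻¹ * ((1:ℂ) - q ^ (k+1))⁻¹)) := by
    intro k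
    rw [div_eq_mul_inv, sq, mul_inv]
    ring
  rw [tprod_congr h1, Multipliable.tprod_mul (multA hq x) ((multA hq x⁻¹).mul (hc.mul hc)),
    Multipliable.tprod_mul (multA hq x⁻¹) (hc.mul hc), Multipliable.tprod_mul hc hc, sq]
  ring

lemma norm_q_lt_one {τ : ℂ} (hτ : 0 < τ.im) : ‖Complex.exp (2 * (Real.pi:ℂ) * I * τ)‖ < 1 := by
  rw [Complex.norm_exp]
  have hre : (2 * (Real.pi:ℂ) * I * τ).re = -(2 * Real.pi * τ.im) := by
    simp [Complex.mul_re, Complex.mul_im]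
  rw [hre, Real.exp_lt_one_iff]
  have := Real.pi_pos
  nlinarith

lemma Phi_add_one (z τ : ℂ) : Phi (z + 1) τ = -Phi z τ := by
  unfold Phi
  have h1 : Complex.exp ((Real.pi:ℂ) * I * (z+1)) = -Complex.exp ((Real.pi:ℂ) * I * z) := by
    rw [show (Real.pi:ℂ) * I * (z+1) = Real.pi * I * z + Real.pi * I by ring,
      Complex.exp_add, Complex.exp_pi_mul_I]
    ring
  have h2 : Complex.exp (-((Real.pi:ℂ) * I * (z+1))) = -Complex.exp (-((Real.pi:ℂ) * I * z)) := by
    rw [show -((Real.pi:ℂ) * I * (z+1)) = -(Real.pi * I * z) + -(Real.pi * I) by ring,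
      Complex.exp_add,
      show Complex.exp (-((Real.pi:ℂ) * I)) = -1 by
        rw [Complex.exp_neg, Complex.exp_pi_mul_I]; norm_num]
    ring
  have h3 : Complex.exp (2 * (Real.pi:ℂ) * I * (z+1)) = Complex.exp (2 * (Real.pi:ℂ) * I * z) := by
    rw [show 2 * (Real.pi:ℂ) * I * (z+1) = 2 * Real.pi * I * z + 2 * Real.pi * I by ring,
      Complex.exp_add, Complex.exp_two_pi_mul_I, mul_one]
  rw [h1, h2, h3]
  ring

lemma Phi_add_tau {τ : ℂ} (hτ : 0 < τ.im) (z : ℂ) :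
    Phi (z + τ) τ = -(Complex.exp (-(2 * (Real.pi:ℂ) * I * z)) *
      Complex.exp (-((Real.pi:ℂ) * I * τ))) * Phi z τ := by
  have hq : ‖Complex.exp (2 * (Real.pi:ℂ) * I * τ)‖ < 1 := norm_q_lt_one hτ
  set q : ℂ := Complex.exp (2 * (Real.pi:ℂ) * I * τ) with hqdef
  set t : ℂ := Complex.exp (2 * (Real.pi:ℂ) * I * z) with htdef
  have hq0 : q ≠ 0 := Complex.exp_ne_zero _
  have ht0 : t ≠ 0 := Complex.exp_ne_zero _
  have hztau : Complex.exp (2 * (Real.pi:ℂ) * I * (z + τ)) = t * q := by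
    rw [htdef, hqdef, ← Complex.exp_add]
    congr 1
    ring
  unfold Phi
  rw [hztau, tprodSplit hq (t * q), tprodSplit hq t]
  -- shift identities
  have hA : (∏' k : ℕ, (1 - t * q ^ (k+1)))
      = (1 - t * q) * ∏' k : ℕ, (1 - (t * q) * q ^ (k+1)) := by
    rw [tprod_eq_zero_mul' (f := fun k : ℕ => 1 - t * q ^ (k+1))
      ((multA hq (t*q)).congr fun n => by ring)]
    congr 1
    · rw [pow_one]
    · exact tprod_congr fun n => by ring
  have hB : (∏' k : ℕ, (1 - (t * q)⁻¹ * q ^ (k+1)))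
      = (1 - t⁻¹) * ∏' k : ℕ, (1 - t⁻¹ * q ^ (k+1)) := by
    rw [tprod_eq_zero_mul' (f := fun k : ℕ => 1 - (t*q)⁻¹ * q ^ (k+1))
      ((multA hq ((t*q)⁻¹ * q)).congr fun n => by ring)]
    congr 1
    · rw [pow_one, mul_inv, mul_assoc, inv_mul_cancel₀ hq0, mul_one]
    · apply tprod_congr
      intro n
      congr 1
      rw [mul_inv]
      field_simp
      ring
  rw [hA, hB]
  -- scalar identity
  set u : ℂ := Complex.exp ((Real.pi:ℂ) * I * z) with hudef
  set v : ℂ := Complex.exp ((Real.pi:ℂ) * I * τ) with hvdef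
  have hu0 : u ≠ 0 := Complex.exp_ne_zero _
  have hv0 : v ≠ 0 := Complex.exp_ne_zero _
  have e1 : Complex.exp ((Real.pi:ℂ) * I * (z + τ)) = u * v := by
    rw [hudef, hvdef, ← Complex.exp_add]; congr 1; ring
  have e2 : Complex.exp (-((Real.pi:ℂ) * I * (z + τ))) = (u * v)⁻¹ := by
    rw [Complex.exp_neg, e1]
  have e3 : Complex.exp (-((Real.pi:ℂ) * I * z)) = u⁻¹ := by
    rw [Complex.exp_neg, hudef]
  have e4 : t = u * u := by
    rw [htdef, hudef, ← Complex.exp_add]; congr 1; ring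
  have e5 : q = v * v := by
    rw [hqdef, hvdef, ← Complex.exp_add]; congr 1; ring
  have e6 : Complex.exp (-(2 * (Real.pi:ℂ) * I * z)) = (u * u)⁻¹ := by
    rw [Complex.exp_neg, ← e4, htdef]
  have e7 : Complex.exp (-((Real.pi:ℂ) * I * τ)) = v⁻¹ := by
    rw [Complex.exp_neg, hvdef]
  have key : (Complex.exp ((Real.pi:ℂ) * I * (z + τ)) -
        Complex.exp (-((Real.pi:ℂ) * I * (z + τ)))) * (1 - t⁻¹)
      = -(Complex.exp (-(2 * (Real.pi:ℂ) * I * z)) * Complex.exp (-((Real.pi:ℂ) * I * τ))) *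
        ((u - u⁻¹) * (1 - t * q)) := by
    rw [e1, e2, e4, e5, e6, e7]
    field_simp
    ring
  rw [e3]
  linear_combination ((∏' k : ℕ, (1 - t * q * q ^ (k+1))) *
    (∏' k : ℕ, (1 - t⁻¹ * q ^ (k+1))) * (∏' k : ℕ, ((1:ℂ) - q ^ (k+1))⁻¹) ^ 2) * key

lemma phi_step_one (z τ σ : ℂ) : phi (z + 1) τ σ = phi z τ σ := by
  unfold phi
  rw [show z + 1 + σ = (z + σ) + 1 by ring, Phi_add_one, Phi_add_one, neg_div_neg_eq]

lemma phi_step_tau {τ : ℂ} (hτ : 0 < τ.im) (z σ : ℂ) :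
    phi (z + τ) τ σ = Complex.exp (-(2 * (Real.pi:ℂ) * I * σ)) * phi z τ σ := by
  unfold phi
  rw [show z + τ + σ = (z + σ) + τ by ring, Phi_add_tau hτ (z + σ), Phi_add_tau hτ z]
  have hsplit : Complex.exp (-(2 * (Real.pi:ℂ) * I * (z + σ)))
      = Complex.exp (-(2 * (Real.pi:ℂ) * I * z)) * Complex.exp (-(2 * (Real.pi:ℂ) * I * σ)) := by
    rw [← Complex.exp_add]; congr 1; ring
  rw [hsplit]
  set A := Complex.exp (-(2 * (Real.pi:ℂ) * I * z))
  set B := Complex.exp (-(2 * (Real.pi:ℂ) * I * σ))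
  set C := Complex.exp (-((Real.pi:ℂ) * I * τ))
  have hne : -(A * C) ≠ 0 :=
    neg_ne_zero.mpr (mul_ne_zero (Complex.exp_ne_zero _) (Complex.exp_ne_zero _))
  rw [show -(A * B * C) * Phi (z + σ) τ = -(A * C) * (B * Phi (z + σ) τ) by ring,
    mul_div_mul_left _ _ hne, mul_div_assoc]

lemma phi_iter {τ : ℂ} (hτ : 0 < τ.im) (z σ : ℂ) : ∀ n : ℕ,
    phi (z + (n : ℂ) * τ) τ σ = Complex.exp (-(2 * (Real.pi:ℂ) * I * σ)) ^ n * phi z τ σ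
  | 0 => by simp
  | (n + 1) => by
    have h1 : z + ((n + 1 : ℕ) : ℂ) * τ = (z + (n : ℂ) * τ) + τ := by push_cast; ring
    rw [h1, phi_step_tau hτ, phi_iter hτ z σ n, pow_succ]
    ring

/-- For `σ = k/N` with `0 < k < N`, `φ(·,τ,σ)` is elliptic w.r.t. the lattice `ℤ·Nτ ⊕ ℤ`. -/
theorem phi_elliptic (N k : ℕ) (hN : 1 < N) (hk0 : 0 < k) (hkN : k < N)
    (τ : ℂ) (hτ : 0 < τ.im) (z : ℂ)
    (hz : ¬ ∃ m n : ℤ, z = (m : ℂ) * τ + (n : ℂ)) :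
    phi (z + (N : ℂ) * τ) τ ((k : ℂ) / (N : ℂ)) = phi z τ ((k : ℂ) / (N : ℂ)) ∧
    phi (z + 1) τ ((k : ℂ) / (N : ℂ)) = phi z τ ((k : ℂ) / (N : ℂ)) := by
  constructor
  · have hNe : (N : ℂ) ≠ 0 := Nat.cast_ne_zero.mpr (by omega)
    rw [phi_iter hτ z ((k : ℂ) / (N : ℂ)) N]
    have hpow : Complex.exp (-(2 * (Real.pi:ℂ) * I * ((k : ℂ) / (N : ℂ)))) ^ N = 1 := by
      rw [← Complex.exp_nat_mul]
      have harg : (N : ℂ) * (-(2 * (Real.pi:ℂ) * I * ((k : ℂ) / (N : ℂ))))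
          = ((-(k : ℤ) : ℤ) : ℂ) * (2 * (Real.pi:ℂ) * I) := by
        push_cast
        field_simp
      rw [harg, Complex.exp_int_mul_two_pi_mul_I]
    rw [hpow, one_mul]
  · exact phi_step_one z τ _
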